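/- arXiv:2505.08959 — 4 statements merged into one kernel-verified Lean document; each statement's English description precedes it below -/
import Mathlib

section
/- (Monotonicity Principle for the transfer operator.) Let H_C and H_S be real Hilbert spaces, let A be a continuous self-adjoint linear operator on H_C with ⟨A w, w⟩ ≥ 0 for all w, let M_α and M_β be continuous self-adjoint linear operators on H_C with M_α ⪯ M_β, and let λ ∈ ℝ be such that both K_α := M_α + λA and K_β := M_β + λA are coercive, with continuous linear inverses T_α and T_β. Let B : H_S → H_C be a continuous linear map and define the transfer operators 𝓗_α(λ) := λ² B* T_α B and 𝓗_β(λ) := λ² B* T_β B. Then 𝓗_β(λ) ⪯ 𝓗_α(λ); explicitly, λ² ⟨T_β(B s), B s⟩ ≤ λ² ⟨T_α(B s), B s⟩ for every s ∈ H_S. In particular, the map from the material-property operator M to the transfer operator λ² B* (M + λA)^{-1} B is monotone (order-reversing) from the Loewner order to the Loewner order. -/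
open scoped RealInnerProductSpace

set_option maxHeartbeats 1000000 in
/-- Monotonicity Principle for the transfer operator: if `Mα ⪯ Mβ`, `A` is
self-adjoint positive semi-definite, and `Kα = Mα + λA`, `Kβ = Mβ + λA` are
coercive with continuous inverses `Tα, Tβ`, then the transfer operators
`𝓗_α(λ) = λ² B* Tα B` and `𝓗_β(λ) = λ² B* Tβ B` satisfy `𝓗_β(λ) ⪯ 𝓗_α(λ)`,
i.e. `λ²⟨Tβ(Bs), Bs⟩ ≤ λ²⟨Tα(Bs), Bs⟩` for every `s`. -/
theorem stmt12
    {HC HS : Type*} [NormedAddCommGroup HC] [InnerProductSpace ℝ HC] [CompleteSpace HC]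
    [NormedAddCommGroup HS] [InnerProductSpace ℝ HS] [CompleteSpace HS]
    (A Mα Mβ : HC →L[ℝ] HC)
    (hA : IsSelfAdjoint A) (hApos : ∀ w : HC, 0 ≤ ⟪A w, w⟫)
    (hMα : IsSelfAdjoint Mα) (hMβ : IsSelfAdjoint Mβ)
    (hle : ∀ w : HC, 0 ≤ ⟪(Mβ - Mα) w, w⟫)
    (lam : ℝ) (Tα Tβ : HC →L[ℝ] HC)
    (cα : ℝ) (hcα : 0 < cα) (hKα : ∀ w : HC, ⟪(Mα + lam • A) w, w⟫ ≥ cα * ‖w‖ ^ 2)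
    (cβ : ℝ) (hcβ : 0 < cβ) (hKβ : ∀ w : HC, ⟪(Mβ + lam • A) w, w⟫ ≥ cβ * ‖w‖ ^ 2)
    (hTα : (Mα + lam • A).comp Tα = ContinuousLinearMap.id ℝ HC)
    (hTα' : Tα.comp (Mα + lam • A) = ContinuousLinearMap.id ℝ HC)
    (hTβ : (Mβ + lam • A).comp Tβ = ContinuousLinearMap.id ℝ HC)
    (hTβ' : Tβ.comp (Mβ + lam • A) = ContinuousLinearMap.id ℝ HC)
    (B : HS →L[ℝ] HC) :
    ∀ s : HS, lam ^ 2 * ⟪Tβ (B s), B s⟫ ≤ lam ^ 2 * ⟪Tα (B s), B s⟫ := by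
  intro s
  set v : HC := B s with hv
  set Kα := Mα + lam • A with hKαdef
  set Kβ := Mβ + lam • A with hKβdef
  -- self-adjointness of Kα
  have hMαs := hMα.isSymmetric
  have hAs := hA.isSymmetric
  have hsym : ∀ u w : HC, ⟪Kα u, w⟫ = ⟪u, Kα w⟫ := by
    intro u w
    simp only [hKαdef, ContinuousLinearMap.add_apply, ContinuousLinearMap.smul_apply,
      ContinuousLinearMap.coe_smul', Pi.smul_apply, inner_add_left, inner_add_right,
      real_inner_smul_left, real_inner_smul_right]
    rw [hMαs.apply_clm u w, hAs.apply_clm u w]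
  set x : HC := Tβ v with hx
  set y : HC := Tα v with hy
  have hxv : Kβ x = v := congrFun (congrArg DFunLike.coe hTβ) v
  have hyv : Kα y = v := congrFun (congrArg DFunLike.coe hTα) v
  -- positivity of the Kα-quadratic form at x - y
  have h1 : (0:ℝ) ≤ ⟪Kα (x - y), x - y⟫ :=
    le_trans (by positivity) (hKα (x - y))
  have hexp : ⟪Kα (x - y), x - y⟫
      = ⟪Kα x, x⟫ - 2 * ⟪x, v⟫ + ⟪y, v⟫ := by
    rw [map_sub, inner_sub_left, inner_sub_right, inner_sub_right]
    have e1 : ⟪Kα x, y⟫ = ⟪x, v⟫ := by rw [hsym x y, hyv]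
    have e2 : ⟪Kα y, x⟫ = ⟪v, x⟫ := by rw [hyv]
    have e3 : ⟪Kα y, y⟫ = ⟪v, y⟫ := by rw [hyv]
    rw [e1, e2, e3, real_inner_comm v x, real_inner_comm v y]
    ring
  -- Kα x = Kβ x - (Mβ - Mα) x
  have hKx : ⟪Kα x, x⟫ = ⟪x, v⟫ - ⟪(Mβ - Mα) x, x⟫ := by
    have : Kα x = Kβ x - (Mβ - Mα) x := by
      simp only [hKαdef, hKβdef]
      simp [ContinuousLinearMap.sub_apply, ContinuousLinearMap.add_apply]
      abel
    rw [this, inner_sub_left, hxv, real_inner_comm v x]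
  have hD := hle x
  have hmain : ⟪x, v⟫ ≤ ⟪y, v⟫ := by
    rw [hexp, hKx] at h1
    linarith
  have hfin : ⟪Tβ v, v⟫ ≤ ⟪Tα v, v⟫ := hmain
  exact mul_le_mul_of_nonneg_left hfin (sq_nonneg lam)
end

section
/- (Monotonicity Principle for the inverse obstacle problem.) Let Ω_C ⊂ ℝ³ be a measurable set, let K be a closed subspace of L²(Ω_C; ℝ³) (a real Hilbert space), let A be a continuous self-adjoint linear operator on K with ⟨A w, w⟩ ≥ 0 for all w ∈ K, let H_S be a real Hilbert space and B : H_S → K a continuous linear map. Let A₁ ⊆ A₂ ⊆ Ω_C be measurable subsets, let η_i > η_BG > 0 be real constants, and define the piecewise resistivities η_{A_j}(x) = η_i for x ∈ A_j and η_{A_j}(x) = η_BG otherwise. Let M₁, M₂ be continuous linear operators on K satisfying ⟨M_j v, w⟩ = ∫_{Ω_C} η_{A_j}(x) v(x) · w(x) dx for all v, w ∈ K (j = 1, 2). Let λ ∈ ℝ be such that both K₁ := M₁ + λA and K₂ := M₂ + λA are coercive, with continuous linear inverses T₁, T₂. Then the transfer operators 𝓗_{A_j}(λ) := λ² B* T_j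 B satisfy 𝓗_{A₂}(λ) ⪯ 𝓗_{A₁}(λ); explicitly, λ² ⟨T₂(B s), B s⟩ ≤ λ² ⟨T₁(B s), B s⟩ for every s ∈ H_S. -/
open MeasureTheory Classical
open scoped RealInnerProductSpace
set_option maxHeartbeats 2000000

/-- Monotonicity Principle for the inverse obstacle problem: for inclusions
`A₁ ⊆ A₂ ⊆ Ω_C` with piecewise resistivities `η_{A_j}` (value `η_i` on `A_j`,
`η_BG` elsewhere, `η_i > η_BG > 0`), if `M₁, M₂` are the corresponding
multiplication operators on a closed subspace `K` of `L²(Ω_C; ℝ³)`, `A` is a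
positive self-adjoint operator, and `K_j = M_j + λA` are coercive with
continuous inverses `T_j`, then the transfer operators `𝓗_{A_j}(λ) = λ² B* T_j B`
satisfy `𝓗_{A₂}(λ) ⪯ 𝓗_{A₁}(λ)`. -/
theorem stmt14
    (ΩC : Set (EuclideanSpace ℝ (Fin 3))) (hΩC : MeasurableSet ΩC)
    (K : Submodule ℝ (Lp (EuclideanSpace ℝ (Fin 3)) 2 (volume.restrict ΩC)))
    (hK : IsClosed (K : Set (Lp (EuclideanSpace ℝ (Fin 3)) 2 (volume.restrict ΩC))))
    (A : K →L[ℝ] K)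
    (hA : ∀ v w : K, ⟪A v, w⟫ = ⟪v, A w⟫) (hApos : ∀ w : K, 0 ≤ ⟪A w, w⟫)
    {HS : Type*} [NormedAddCommGroup HS] [InnerProductSpace ℝ HS] [CompleteSpace HS]
    (B : HS →L[ℝ] K)
    (A₁ A₂ : Set (EuclideanSpace ℝ (Fin 3)))
    (hA₁ : MeasurableSet A₁) (hA₂ : MeasurableSet A₂)
    (h₁₂ : A₁ ⊆ A₂) (h₂C : A₂ ⊆ ΩC)
    (ηi ηBG : ℝ) (hi : ηi > ηBG) (hBG : ηBG > 0)
    (M₁ M₂ : K →L[ℝ] K)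
    (hM₁ : ∀ v w : K, ⟪M₁ v, w⟫ =
      ∫ x in ΩC, (if x ∈ A₁ then ηi else ηBG) *
        ⟪(v : Lp (EuclideanSpace ℝ (Fin 3)) 2 (volume.restrict ΩC)) x,
         (w : Lp (EuclideanSpace ℝ (Fin 3)) 2 (volume.restrict ΩC)) x⟫)
    (hM₂ : ∀ v w : K, ⟪M₂ v, w⟫ =
      ∫ x in ΩC, (if x ∈ A₂ then ηi else ηBG) *
        ⟪(v : Lp (EuclideanSpace ℝ (Fin 3)) 2 (volume.restrict ΩC)) x,
         (w : Lp (EuclideanSpace ℝ (Fin 3)) 2 (volume.restrict ΩC)) x⟫)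
    (lam : ℝ) (T₁ T₂ : K →L[ℝ] K)
    (c₁ : ℝ) (hc₁ : 0 < c₁) (hK₁ : ∀ w : K, ⟪(M₁ + lam • A) w, w⟫ ≥ c₁ * ‖w‖ ^ 2)
    (c₂ : ℝ) (hc₂ : 0 < c₂) (hK₂ : ∀ w : K, ⟪(M₂ + lam • A) w, w⟫ ≥ c₂ * ‖w‖ ^ 2)
    (hT₁ : (M₁ + lam • A).comp T₁ = ContinuousLinearMap.id ℝ K)
    (hT₁' : T₁.comp (M₁ + lam • A) = ContinuousLinearMap.id ℝ K)
    (hT₂ : (M₂ + lam • A).comp T₂ = ContinuousLinearMap.id ℝ K)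
    (hT₂' : T₂.comp (M₂ + lam • A) = ContinuousLinearMap.id ℝ K) :
    ∀ s : HS, lam ^ 2 * ⟪T₂ (B s), B s⟫ ≤ lam ^ 2 * ⟪T₁ (B s), B s⟫ := by

  intro s
  refine mul_le_mul_of_nonneg_left ?_ (sq_nonneg lam)
  have hKv₁ : (M₁ + lam • A) (T₁ (B s)) = B s := DFunLike.congr_fun hT₁ (B s)
  have hKv₂ : (M₂ + lam • A) (T₂ (B s)) = B s := DFunLike.congr_fun hT₂ (B s)
  have hM₁sym : ∀ v w : K, ⟪M₁ v, w⟫ = ⟪v, M₁ w⟫ := by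
    intro v w
    have hsym : ⟪M₁ v, w⟫ = ⟪M₁ w, v⟫ := by
      rw [hM₁ v w, hM₁ w v]
      exact integral_congr_ae (Filter.Eventually.of_forall fun x =>
        congrArg (fun r => (if x ∈ A₁ then ηi else ηBG) * r) (real_inner_comm _ _))
    exact hsym.trans (real_inner_comm v (M₁ w))
  have hK₁sym : ∀ v w : K, ⟪(M₁ + lam • A) v, w⟫ = ⟪v, (M₁ + lam • A) w⟫ := by
    intro v w
    simp only [ContinuousLinearMap.add_apply, ContinuousLinearMap.smul_apply,
      inner_add_left, inner_add_right, real_inner_smul_left, real_inner_smul_right,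
      hM₁sym, hA]
    congr 1
    have e1 := real_inner_smul_left (A v) w lam
    have e2 := real_inner_smul_right v (A w) lam
    rw [hA] at e1
    exact e1.trans e2.symm
  have hK₁pos : ∀ w : K, 0 ≤ ⟪(M₁ + lam • A) w, w⟫ := by
    intro w
    have := hK₁ w
    nlinarith [sq_nonneg (‖w‖)]
  have hmono : ⟪M₁ (T₂ (B s)), T₂ (B s)⟫ ≤ ⟪M₂ (T₂ (B s)), T₂ (B s)⟫ := by
    rw [hM₁ _ _, hM₂ _ _]
    have hint : Integrable (fun x =>
        (⟪((T₂ (B s) : K) : Lp (EuclideanSpace ℝ (Fin 3)) 2 (volume.restrict ΩC)) x,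
          ((T₂ (B s) : K) : Lp (EuclideanSpace ℝ (Fin 3)) 2 (volume.restrict ΩC)) x⟫ : ℝ))
        (volume.restrict ΩC) :=
      L2.integrable_inner _ _
    have hbdd : ∀ (S : Set (EuclideanSpace ℝ (Fin 3))), MeasurableSet S →
        Integrable (fun x => (if x ∈ S then ηi else ηBG) *
          ⟪((T₂ (B s) : K) : Lp (EuclideanSpace ℝ (Fin 3)) 2 (volume.restrict ΩC)) x,
           ((T₂ (B s) : K) : Lp (EuclideanSpace ℝ (Fin 3)) 2 (volume.restrict ΩC)) x⟫)
          (volume.restrict ΩC) := by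
      intro S hS
      refine hint.bdd_mul (c := max |ηi| |ηBG|) ?_ (Filter.Eventually.of_forall fun x => ?_)
      · exact (Measurable.ite hS measurable_const measurable_const).aestronglyMeasurable
      · by_cases hx : x ∈ S <;> simp [hx, le_max_left, le_max_right]
    refine integral_mono (hbdd A₁ hA₁) (hbdd A₂ hA₂) fun x => ?_
    have hq : (0:ℝ) ≤
        ⟪((T₂ (B s) : K) : Lp (EuclideanSpace ℝ (Fin 3)) 2 (volume.restrict ΩC)) x,
         ((T₂ (B s) : K) : Lp (EuclideanSpace ℝ (Fin 3)) 2 (volume.restrict ΩC)) x⟫ :=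
      real_inner_self_nonneg
    by_cases h1 : x ∈ A₁
    · simp [h1, h₁₂ h1]
    · by_cases h2 : x ∈ A₂
      · simp only [h1, h2, if_true, if_false]
        exact mul_le_mul_of_nonneg_right hi.le hq
      · simp [h1, h2]
  have h1 : ⟪(M₁ + lam • A) (T₂ (B s)), T₁ (B s)⟫ = ⟪T₂ (B s), B s⟫ := by
    rw [hK₁sym, hKv₁]
  have h2 : ⟪(M₁ + lam • A) (T₁ (B s)), T₂ (B s)⟫ = ⟪B s, T₂ (B s)⟫ := by rw [hKv₁]
  have h3 : ⟪(M₁ + lam • A) (T₁ (B s)), T₁ (B s)⟫ = ⟪B s, T₁ (B s)⟫ := by rw [hKv₁]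
  have hexp : ⟪(M₁ + lam • A) (T₂ (B s) - T₁ (B s)), T₂ (B s) - T₁ (B s)⟫ =
      ⟪(M₁ + lam • A) (T₂ (B s)), T₂ (B s)⟫ - ⟪T₂ (B s), B s⟫ - ⟪B s, T₂ (B s)⟫
        + ⟪B s, T₁ (B s)⟫ := by
    simp only [map_sub, inner_sub_left, inner_sub_right, h1, h2, h3]
    ring
  have hK₁le : ⟪(M₁ + lam • A) (T₂ (B s)), T₂ (B s)⟫ ≤ ⟪B s, T₂ (B s)⟫ := by
    have he : ⟪(M₂ + lam • A) (T₂ (B s)), T₂ (B s)⟫ = ⟪B s, T₂ (B s)⟫ := by rw [hKv₂]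
    have hdiff : ⟪(M₁ + lam • A) (T₂ (B s)), T₂ (B s)⟫ ≤
        ⟪(M₂ + lam • A) (T₂ (B s)), T₂ (B s)⟫ := by
      simp only [ContinuousLinearMap.add_apply, inner_add_left]
      linarith [hmono]
    linarith
  have hkey := hK₁pos (T₂ (B s) - T₁ (B s))
  have hc2 : ⟪B s, T₂ (B s)⟫ = ⟪T₂ (B s), B s⟫ := real_inner_comm _ _
  have hc1 : ⟪B s, T₁ (B s)⟫ = ⟪T₁ (B s), B s⟫ := real_inner_comm _ _
  linarith [hkey, hexp, hK₁le]
end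

section
/- (Shape-monotonicity test, contrapositive form.) In the setting of the Monotonicity Principle for the inverse obstacle problem — Ω_C ⊂ ℝ³ measurable, K a closed subspace of L²(Ω_C; ℝ³), A a continuous self-adjoint positive operator on K, B : H_S → K continuous linear, A₁, A₂ ⊆ Ω_C measurable, η_i > η_BG > 0, M₁, M₂ continuous operators on K with ⟨M_j v, w⟩ = ∫_{Ω_C} η_{A_j}(x) v(x) · w(x) dx for all v, w ∈ K, λ ∈ ℝ with K_j := M_j + λA coercive with inverses T_j, and 𝓗_{A_j}(λ) := λ² B* T_j B — suppose there exists s ∈ H_S with λ² ⟨T₂(B s), B s⟩ > λ² ⟨T₁(B s), B s⟩ (i.e., 𝓗_{A₂}(λ) ⋠ 𝓗_{A₁}(λ)). Then the set A₁ \ A₂ has positive Lebesgue measure; in particular A₁ ⊄ A₂. -/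
set_option maxHeartbeats 40000000


open MeasureTheory Classical
open scoped RealInnerProductSpace


section Aux
variable {E : Type*} [NormedAddCommGroup E] [InnerProductSpace ℝ E]

private lemma aux_sym (M A : E →L[ℝ] E) (lam : ℝ)
    (hM : ∀ v w : E, ⟪M v, w⟫ = ⟪v, M w⟫) (hA : ∀ v w : E, ⟪A v, w⟫ = ⟪v, A w⟫) :
    ∀ v w : E, ⟪(M + lam • A) v, w⟫ = ⟪v, (M + lam • A) w⟫ := by
  intro v w
  simp only [ContinuousLinearMap.add_apply, ContinuousLinearMap.smul_apply,
    inner_add_left, inner_add_right, real_inner_smul_left, real_inner_smul_right,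
    hM, hA]

private lemma aux_add_mono (M₁ M₂ S : E →L[ℝ] E)
    (h : ∀ w : E, ⟪M₁ w, w⟫ ≤ ⟪M₂ w, w⟫) :
    ∀ w : E, ⟪(M₁ + S) w, w⟫ ≤ ⟪(M₂ + S) w, w⟫ := by
  intro w
  simp only [ContinuousLinearMap.add_apply, inner_add_left]
  linarith [h w]

private lemma aux_inv_mono (K₁ K₂ T₁ T₂ : E →L[ℝ] E)
    (hsym : ∀ v w : E, ⟪K₁ v, w⟫ = ⟪v, K₁ w⟫)
    (hpos : ∀ w : E, (0:ℝ) ≤ ⟪K₁ w, w⟫)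
    (hle : ∀ w : E, ⟪K₁ w, w⟫ ≤ ⟪K₂ w, w⟫)
    (u : E) (e₁ : K₁ (T₁ u) = u) (e₂ : K₂ (T₂ u) = u) :
    ⟪T₂ u, u⟫ ≤ ⟪T₁ u, u⟫ := by
  have hp := hpos (T₂ u - T₁ u)
  have hexp : ⟪K₁ (T₂ u - T₁ u), T₂ u - T₁ u⟫ =
      ⟪K₁ (T₂ u), T₂ u⟫ - 2 * ⟪u, T₂ u⟫ + ⟪u, T₁ u⟫ := by
    have h1 : ⟪K₁ (T₂ u), T₁ u⟫ = ⟪T₂ u, u⟫ := by rw [hsym, e₁]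
    have h2 : ⟪K₁ (T₁ u), T₂ u⟫ = ⟪u, T₂ u⟫ := by rw [e₁]
    have h3 : ⟪K₁ (T₁ u), T₁ u⟫ = ⟪u, T₁ u⟫ := by rw [e₁]
    rw [map_sub, inner_sub_left, inner_sub_right, inner_sub_right, h1, h2, h3,
      real_inner_comm (T₂ u) u]
    ring
  have hKle := hle (T₂ u)
  have hK2 : ⟪K₂ (T₂ u), T₂ u⟫ = ⟪u, T₂ u⟫ := by rw [e₂]
  have h4 : ⟪T₂ u, u⟫ = ⟪u, T₂ u⟫ := real_inner_comm _ _
  have h5 : ⟪T₁ u, u⟫ = ⟪u, T₁ u⟫ := real_inner_comm _ _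
  linarith [hexp ▸ hp]

end Aux

/-- Shape-monotonicity test (contrapositive form of the Monotonicity Principle):
in the setting of the inverse obstacle problem, if the transfer operators violate
the Loewner comparison `𝓗_{A₂}(λ) ⪯ 𝓗_{A₁}(λ)` — i.e. there is `s` with
`λ²⟨T₂(Bs), Bs⟩ > λ²⟨T₁(Bs), Bs⟩` — then `A₁ \ A₂` has positive Lebesgue
measure; in particular `A₁ ⊄ A₂`. -/
theorem stmt15
    (ΩC : Set (EuclideanSpace ℝ (Fin 3))) (hΩC : MeasurableSet ΩC)
    (K : Submodule ℝ (Lp (EuclideanSpace ℝ (Fin 3)) 2 (volume.restrict ΩC)))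
    (hK : IsClosed (K : Set (Lp (EuclideanSpace ℝ (Fin 3)) 2 (volume.restrict ΩC))))
    (A : K →L[ℝ] K)
    (hA : ∀ v w : K, ⟪A v, w⟫ = ⟪v, A w⟫) (hApos : ∀ w : K, 0 ≤ ⟪A w, w⟫)
    {HS : Type*} [NormedAddCommGroup HS] [InnerProductSpace ℝ HS] [CompleteSpace HS]
    (B : HS →L[ℝ] K)
    (A₁ A₂ : Set (EuclideanSpace ℝ (Fin 3)))
    (hA₁ : MeasurableSet A₁) (hA₂ : MeasurableSet A₂)
    (h₁C : A₁ ⊆ ΩC) (h₂C : A₂ ⊆ ΩC)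
    (ηi ηBG : ℝ) (hi : ηi > ηBG) (hBG : ηBG > 0)
    (M₁ M₂ : K →L[ℝ] K)
    (hM₁ : ∀ v w : K, ⟪M₁ v, w⟫ =
      ∫ x in ΩC, (if x ∈ A₁ then ηi else ηBG) *
        ⟪(v : Lp (EuclideanSpace ℝ (Fin 3)) 2 (volume.restrict ΩC)) x,
         (w : Lp (EuclideanSpace ℝ (Fin 3)) 2 (volume.restrict ΩC)) x⟫)
    (hM₂ : ∀ v w : K, ⟪M₂ v, w⟫ =
      ∫ x in ΩC, (if x ∈ A₂ then ηi else ηBG) *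
        ⟪(v : Lp (EuclideanSpace ℝ (Fin 3)) 2 (volume.restrict ΩC)) x,
         (w : Lp (EuclideanSpace ℝ (Fin 3)) 2 (volume.restrict ΩC)) x⟫)
    (lam : ℝ) (T₁ T₂ : K →L[ℝ] K)
    (c₁ : ℝ) (hc₁ : 0 < c₁) (hK₁ : ∀ w : K, ⟪(M₁ + lam • A) w, w⟫ ≥ c₁ * ‖w‖ ^ 2)
    (c₂ : ℝ) (hc₂ : 0 < c₂) (hK₂ : ∀ w : K, ⟪(M₂ + lam • A) w, w⟫ ≥ c₂ * ‖w‖ ^ 2)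
    (hT₁ : (M₁ + lam • A).comp T₁ = ContinuousLinearMap.id ℝ K)
    (hT₁' : T₁.comp (M₁ + lam • A) = ContinuousLinearMap.id ℝ K)
    (hT₂ : (M₂ + lam • A).comp T₂ = ContinuousLinearMap.id ℝ K)
    (hT₂' : T₂.comp (M₂ + lam • A) = ContinuousLinearMap.id ℝ K)
    (hviol : ∃ s : HS, lam ^ 2 * ⟪T₁ (B s), B s⟫ < lam ^ 2 * ⟪T₂ (B s), B s⟫) :
    0 < volume (A₁ \ A₂) ∧ ¬ A₁ ⊆ A₂ := by

  -- It suffices to show the measure is positive.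
  have key : 0 < volume (A₁ \ A₂) := by
    rw [pos_iff_ne_zero]
    intro h0
    obtain ⟨s, hs⟩ := hviol
    -- almost everywhere, membership in A₁ implies membership in A₂
    have hae : ∀ᵐ x ∂(volume.restrict ΩC), x ∈ A₁ → x ∈ A₂ := by
      have hμ0 : (volume.restrict ΩC) (A₁ \ A₂) = 0 :=
        le_antisymm (le_trans (Measure.restrict_le_self _) h0.le) zero_le
      filter_upwards [measure_eq_zero_iff_ae_notMem.mp hμ0] with x hx h1
      by_contra h2
      exact hx ⟨h1, h2⟩
    -- M₁ ⪯ M₂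
    have hMle : ∀ w : K, ⟪M₁ w, w⟫ ≤ ⟪M₂ w, w⟫ := by
      intro w
      rw [hM₁, hM₂]
      have hiw : Integrable (fun x =>
          ⟪(w : Lp (EuclideanSpace ℝ (Fin 3)) 2 (volume.restrict ΩC)) x,
           (w : Lp (EuclideanSpace ℝ (Fin 3)) 2 (volume.restrict ΩC)) x⟫) (volume.restrict ΩC) :=
        L2.integrable_inner (𝕜 := ℝ) _ _
      have hm1 : AEStronglyMeasurable (fun x => if x ∈ A₁ then ηi else ηBG) (volume.restrict ΩC) :=
        (Measurable.ite hA₁ measurable_const measurable_const).aestronglyMeasurable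
      have hm2 : AEStronglyMeasurable (fun x => if x ∈ A₂ then ηi else ηBG) (volume.restrict ΩC) :=
        (Measurable.ite hA₂ measurable_const measurable_const).aestronglyMeasurable
      have hbd : ∀ (S : Set (EuclideanSpace ℝ (Fin 3))) (x),
          ‖if x ∈ S then ηi else ηBG‖ ≤ ηi := by
        intro S x
        rw [Real.norm_eq_abs, abs_of_pos (by split <;> linarith)]
        split <;> linarith
      have hint1 : Integrable (fun x => (if x ∈ A₁ then ηi else ηBG) *
          ⟪(w : Lp (EuclideanSpace ℝ (Fin 3)) 2 (volume.restrict ΩC)) x,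
           (w : Lp (EuclideanSpace ℝ (Fin 3)) 2 (volume.restrict ΩC)) x⟫) (volume.restrict ΩC) :=
        hiw.bdd_mul hm1 (Filter.Eventually.of_forall (hbd A₁))
      have hint2 : Integrable (fun x => (if x ∈ A₂ then ηi else ηBG) *
          ⟪(w : Lp (EuclideanSpace ℝ (Fin 3)) 2 (volume.restrict ΩC)) x,
           (w : Lp (EuclideanSpace ℝ (Fin 3)) 2 (volume.restrict ΩC)) x⟫) (volume.restrict ΩC) :=
        hiw.bdd_mul hm2 (Filter.Eventually.of_forall (hbd A₂))
      refine integral_mono_ae hint1 hint2 ?_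
      filter_upwards [hae] with x hx
      have hinn : (0:ℝ) ≤ ⟪(w : Lp (EuclideanSpace ℝ (Fin 3)) 2 (volume.restrict ΩC)) x,
          (w : Lp (EuclideanSpace ℝ (Fin 3)) 2 (volume.restrict ΩC)) x⟫ := real_inner_self_nonneg
      refine mul_le_mul_of_nonneg_right ?_ hinn
      by_cases h1 : x ∈ A₁
      · simp [h1, hx h1]
      · by_cases h2 : x ∈ A₂ <;> simp [h1, h2] <;> linarith
    -- M₁ is self-adjoint, hence so is K₁ := M₁ + lam • A
    have hM₁sym : ∀ v w : K, ⟪M₁ v, w⟫ = ⟪v, M₁ w⟫ := by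
      intro v w
      have h1 : ⟪M₁ v, w⟫ = ⟪M₁ w, v⟫ := by
        rw [hM₁, hM₁]
        exact integral_congr_ae (Filter.Eventually.of_forall fun x => by
          beta_reduce
          rw [real_inner_comm])
      rw [h1, real_inner_comm]
    have hK₁sym := aux_sym M₁ A lam hM₁sym hA
    have hK₁pos : ∀ w : K, (0:ℝ) ≤ ⟪(M₁ + lam • A) w, w⟫ := fun w =>
      le_trans (by positivity) (hK₁ w)
    have hle := aux_add_mono M₁ M₂ (lam • A) hMle
    have e₁ : (M₁ + lam • A) (T₁ (B s)) = B s := by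
      have h := ContinuousLinearMap.ext_iff.mp hT₁ (B s)
      rwa [ContinuousLinearMap.comp_apply, ContinuousLinearMap.id_apply] at h
    have e₂ : (M₂ + lam • A) (T₂ (B s)) = B s := by
      have h := ContinuousLinearMap.ext_iff.mp hT₂ (B s)
      rwa [ContinuousLinearMap.comp_apply, ContinuousLinearMap.id_apply] at h
    have hmain := aux_inv_mono (M₁ + lam • A) (M₂ + lam • A) T₁ T₂
      hK₁sym hK₁pos hle (B s) e₁ e₂
    have := mul_le_mul_of_nonneg_left hmain (sq_nonneg lam)
    linarith
  refine ⟨key, fun hsub => ?_⟩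
  rw [Set.diff_eq_empty.mpr hsub] at key
  simp at key
end

section
/- (Uniqueness of the weak solution of the magneto-quasi-stationary evolution problem, energy form.) Let H be a real Hilbert space, let M be a continuous self-adjoint linear operator on H with ⟨M w, w⟩ ≥ c‖w‖² for all w ∈ H and some c > 0, and let A be a continuous self-adjoint linear operator on H with ⟨A w, w⟩ ≥ 0 for all w. Let T > 0 and let J : [0, T] → H be differentiable on [0, T] (with derivative J′) and satisfy M J(t) + A J′(t) = 0 for every t ∈ [0, T], together with the initial condition J(0) = 0. Then J(t) = 0 for every t ∈ [0, T]. Consequently, two solutions of the inhomogeneous equation M J(t) + A J′(t) = F(t) with the same initial datum coincide. -/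
open scoped RealInnerProductSpace

theorem aux16
    {H : Type*} [NormedAddCommGroup H] [InnerProductSpace ℝ H] [CompleteSpace H]
    (M A : H →L[ℝ] H) (hM : IsSelfAdjoint M) (hA : IsSelfAdjoint A)
    (c : ℝ) (hc : 0 < c) (hMc : ∀ w : H, ⟪M w, w⟫ ≥ c * ‖w‖ ^ 2)
    (hApos : ∀ w : H, 0 ≤ ⟪A w, w⟫)
    (T : ℝ) (hT : 0 < T)
    (J J' : ℝ → H)
    (hderiv : ∀ t ∈ Set.Icc (0 : ℝ) T, HasDerivWithinAt J (J' t) (Set.Icc 0 T) t)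
    (heq : ∀ t ∈ Set.Icc (0 : ℝ) T, M (J t) + A (J' t) = 0)
    (h0 : J 0 = 0) :
    ∀ t ∈ Set.Icc (0 : ℝ) T, J t = 0 := by
  set s := Set.Icc (0 : ℝ) T with hs
  have hsym := ContinuousLinearMap.isSelfAdjoint_iff_isSymmetric.mp hA
  set E : ℝ → ℝ := fun t => ⟪A (J t), J t⟫ with hE
  have hAJ' : ∀ t ∈ s, A (J' t) = -(M (J t)) := fun t ht =>
    eq_neg_of_add_eq_zero_right (heq t ht)
  have hEd : ∀ t ∈ s, HasDerivWithinAt E (-(2 * ⟪M (J t), J t⟫)) s t := by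
    intro t ht
    have hAJ : HasDerivWithinAt (fun u => A (J u)) (A (J' t)) s t :=
      A.hasFDerivAt.comp_hasDerivWithinAt t (hderiv t ht)
    have h := hAJ.inner ℝ (hderiv t ht)
    have hval : ⟪A (J t), J' t⟫ + ⟪A (J' t), J t⟫ = -(2 * ⟪M (J t), J t⟫) := by
      have h1 : ⟪A (J t), J' t⟫ = ⟪A (J' t), J t⟫ :=
        (hsym (J t) (J' t)).trans (real_inner_comm _ _)
      rw [h1, hAJ' t ht, inner_neg_left]; ring
    rw [hval] at h
    exact h
  have hEnonneg : ∀ t, 0 ≤ E t := fun t => hApos (J t)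
  have hE0 : E 0 = 0 := by simp [hE, h0]
  -- E is antitone on s
  have hcont : ContinuousOn E s := fun t ht => (hEd t ht).continuousWithinAt
  have hanti : AntitoneOn E s := by
    apply antitoneOn_of_deriv_nonpos (convex_Icc 0 T) hcont
    · intro t ht
      rw [interior_Icc] at ht
      exact ((hEd t (Set.mem_Icc_of_Ioo ht)).hasDerivAt
        (Icc_mem_nhds ht.1 ht.2)).differentiableAt.differentiableWithinAt
    · intro t ht
      rw [interior_Icc] at ht
      have hd := (hEd t (Set.mem_Icc_of_Ioo ht)).hasDerivAt (Icc_mem_nhds ht.1 ht.2)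
      rw [hd.deriv]
      have := hMc (J t)
      nlinarith [sq_nonneg ‖J t‖]
  -- hence E = 0 on s
  have hEzero : ∀ t ∈ s, E t = 0 := by
    intro t ht
    have h1 : E t ≤ E 0 := hanti (Set.left_mem_Icc.mpr hT.le) ht ht.1
    have h2 := hEnonneg t
    linarith [hE0 ▸ h1]
  -- E constant zero ⇒ its derivative within s is zero
  intro t ht
  have hzero : HasDerivWithinAt E 0 s t :=
    (hasDerivWithinAt_const t s (0 : ℝ)).congr (fun u hu => hEzero u hu) (hEzero t ht)
  have hud : UniqueDiffWithinAt ℝ s t := (uniqueDiffOn_Icc hT) t ht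
  have : -(2 * ⟪M (J t), J t⟫) = 0 :=
    ((hEd t ht).derivWithin hud).symm.trans (hzero.derivWithin hud)
  have hMJ : ⟪M (J t), J t⟫ = 0 := by linarith
  have := hMc (J t)
  have hn : ‖J t‖ ^ 2 ≤ 0 := by nlinarith
  have : ‖J t‖ = 0 := by nlinarith [norm_nonneg (J t)]
  exact norm_eq_zero.mp this

/-- Uniqueness of the weak solution of the magneto-quasi-stationary evolution
problem (energy form): if `M` is coercive self-adjoint, `A` is positive
semi-definite self-adjoint, and `J` solves `M J(t) + A J′(t) = 0` on `[0, T]`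
with `J(0) = 0`, then `J ≡ 0` on `[0, T]`; consequently two solutions of the
inhomogeneous equation `M J(t) + A J′(t) = F(t)` with the same initial datum
coincide on `[0, T]`. -/
theorem stmt16
    {H : Type*} [NormedAddCommGroup H] [InnerProductSpace ℝ H] [CompleteSpace H]
    (M A : H →L[ℝ] H) (hM : IsSelfAdjoint M) (hA : IsSelfAdjoint A)
    (c : ℝ) (hc : 0 < c) (hMc : ∀ w : H, ⟪M w, w⟫ ≥ c * ‖w‖ ^ 2)
    (hApos : ∀ w : H, 0 ≤ ⟪A w, w⟫)
    (T : ℝ) (hT : 0 < T)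
    (J J' : ℝ → H)
    (hderiv : ∀ t ∈ Set.Icc (0 : ℝ) T, HasDerivWithinAt J (J' t) (Set.Icc 0 T) t)
    (heq : ∀ t ∈ Set.Icc (0 : ℝ) T, M (J t) + A (J' t) = 0)
    (h0 : J 0 = 0) :
    (∀ t ∈ Set.Icc (0 : ℝ) T, J t = 0) ∧
      ∀ (F J₁ J₂ J₁' J₂' : ℝ → H),
        (∀ t ∈ Set.Icc (0 : ℝ) T, HasDerivWithinAt J₁ (J₁' t) (Set.Icc 0 T) t) →
        (∀ t ∈ Set.Icc (0 : ℝ) T, HasDerivWithinAt J₂ (J₂' t) (Set.Icc 0 T) t) →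
        (∀ t ∈ Set.Icc (0 : ℝ) T, M (J₁ t) + A (J₁' t) = F t) →
        (∀ t ∈ Set.Icc (0 : ℝ) T, M (J₂ t) + A (J₂' t) = F t) →
        J₁ 0 = J₂ 0 →
        ∀ t ∈ Set.Icc (0 : ℝ) T, J₁ t = J₂ t := by
  constructor
  · exact aux16 M A hM hA c hc hMc hApos T hT J J' hderiv heq h0
  · intro F J₁ J₂ J₁' J₂' hd₁ hd₂ he₁ he₂ h00 t ht
    have key := aux16 M A hM hA c hc hMc hApos T hT (fun u => J₁ u - J₂ u)
      (fun u => J₁' u - J₂' u)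
      (fun u hu => (hd₁ u hu).sub (hd₂ u hu))
      (fun u hu => by
        have h1 := he₁ u hu; have h2 := he₂ u hu
        simp only [map_sub]
        rw [show M (J₁ u) - M (J₂ u) + (A (J₁' u) - A (J₂' u))
            = (M (J₁ u) + A (J₁' u)) - (M (J₂ u) + A (J₂' u)) by abel, h1, h2, sub_self])
      (by simp [h00]) t ht
    exact sub_eq_zero.mp key
end
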